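/- arXiv:math/9809066 — 4 statements merged into one kernel-verified Lean document; each statement's English description precedes it below -/
import Mathlib

section
/- For every real q with 0 < q < 1, every integer L ≥ 2 and every integer A, the q-trinomial coefficients satisfy the depth-two recurrence T^0(L,A) = q^{L−A} T^1(L−1, A−1) + T^0(L−1, A) + q^{L−1} T^1(L−1, A+1) + q^{L−1}(q^{L−1} − 1) T^0(L−2, A). -/
open Finset

noncomputable section

/-- `(q)_k = ∏_{j=1}^k (1 - q^j)`. -/
def qPoch (q : ℝ) (k : ℕ) : ℝ := ∏ j ∈ Finset.range k, (1 - q ^ (j + 1))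

/-- The Andrews–Baxter `q`-trinomial coefficient `T^n(L,A)`. -/
def qTri (q : ℝ) (n : ℤ) (L : ℕ) (A : ℤ) : ℝ :=
  if |A| ≤ (L : ℤ) then
    ∑ j ∈ Finset.range (L + 1),
      if 0 ≤ (j : ℤ) + A ∧ 0 ≤ (L : ℤ) - 2 * j - A then
        q ^ ((j : ℤ) * ((j : ℤ) + A - n)) * qPoch q L /
          (qPoch q j * qPoch q (((j : ℤ) + A).toNat) * qPoch q (((L : ℤ) - 2 * j - A).toNat))
      else 0
  else 0

/-!
Write `[a, b, c] = (q)_{a+b+c} / ((q)_a (q)_b (q)_c)`, zero when a part is negative. The `j`-th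
summand of `T^n(L, A)` is `q^{j(j+A-n)} [j, j+A, L-2j-A]`, and the recurrence holds summand by
summand, its last two terms shifted by one in `j`. After cancelling powers of `q` it is the
Pascal-type rule
`[a, b, c] = [a, b, c-1] + q^c ([a, b-1, c] + [a-1, b, c] - (1 - q^{a+b+c-1}) [a-1, b-1, c])`,
which follows from `(1 - q^{a+b+c}) [a, b, c-1] = (1 - q^c) [a, b, c]` and its permutations,
because `1 - q^{a+b+c} = (1 - q^c) + q^c (1 - q^a q^b)`.
-/

def qMultinomial (q : ℝ) (a b c : ℤ) : ℝ :=
  if 0 ≤ a ∧ 0 ≤ b ∧ 0 ≤ c then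
    qPoch q (a + b + c).toNat / (qPoch q a.toNat * qPoch q b.toNat * qPoch q c.toNat)
  else 0

section

variable {q : ℝ}

theorem one_sub_pow_ne_zero (hq : |q| < 1) {n : ℕ} (hn : n ≠ 0) : 1 - q ^ n ≠ 0 := by
  have : |q ^ n| < 1 := by rw [abs_pow]; exact pow_lt_one₀ (abs_nonneg q) hq hn
  exact sub_ne_zero.mpr (lt_of_le_of_lt (le_abs_self _) this).ne'

theorem qPoch_succ (q : ℝ) (k : ℕ) : qPoch q (k + 1) = qPoch q k * (1 - q ^ (k + 1)) :=
  prod_range_succ _ _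

theorem qPoch_ne_zero (hq : |q| < 1) (k : ℕ) : qPoch q k ≠ 0 :=
  prod_ne_zero_iff.mpr fun j _ => one_sub_pow_ne_zero hq j.succ_ne_zero

theorem qMultinomial_natCast (q : ℝ) (a b c : ℕ) :
    qMultinomial q a b c = qPoch q (a + b + c) / (qPoch q a * qPoch q b * qPoch q c) := by
  rw [qMultinomial, if_pos (by omega), ← Nat.cast_add, ← Nat.cast_add]
  simp only [Int.toNat_natCast]

theorem qMultinomial_of_neg (q : ℝ) {a b c : ℤ} (h : a < 0 ∨ b < 0 ∨ c < 0) :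
    qMultinomial q a b c = 0 :=
  if_neg (by omega)

theorem qMultinomial_swap_left (q : ℝ) (a b c : ℤ) :
    qMultinomial q a b c = qMultinomial q b a c := by
  unfold qMultinomial
  rw [add_comm a b, mul_comm (qPoch q a.toNat)]
  exact if_congr (by tauto) rfl rfl

theorem qMultinomial_swap_right (q : ℝ) (a b c : ℤ) :
    qMultinomial q a b c = qMultinomial q a c b := by
  unfold qMultinomial
  rw [add_right_comm a b c, mul_right_comm _ (qPoch q b.toNat)]
  exact if_congr (by tauto) rfl rfl

theorem one_sub_zpow_mul_qMultinomial_sub_one_right (hq : |q| < 1) (a b c : ℤ) :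
    (1 - q ^ (a + b + c)) * qMultinomial q a b (c - 1) = (1 - q ^ c) * qMultinomial q a b c := by
  by_cases h : 0 ≤ a ∧ 0 ≤ b ∧ 0 < c
  · obtain ⟨a, rfl⟩ := Int.eq_ofNat_of_zero_le h.1
    obtain ⟨b, rfl⟩ := Int.eq_ofNat_of_zero_le h.2.1
    obtain ⟨c, rfl⟩ : ∃ c' : ℕ, c = (c' + 1 : ℕ) := ⟨(c - 1).toNat, by omega⟩
    rw [show ((c + 1 : ℕ) : ℤ) - 1 = c by push_cast; ring, qMultinomial_natCast,
      qMultinomial_natCast, ← Nat.cast_add, ← Nat.cast_add, zpow_natCast, zpow_natCast,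
      ← add_assoc, qPoch_succ, qPoch_succ]
    have := qPoch_ne_zero hq
    field_simp [one_sub_pow_ne_zero hq c.succ_ne_zero]
  · rw [qMultinomial_of_neg q (by omega), mul_zero]
    rcases (show c = 0 ∨ a < 0 ∨ b < 0 ∨ c < 0 by omega) with rfl | hneg
    · simp
    · rw [qMultinomial_of_neg q hneg, mul_zero]

theorem one_sub_zpow_mul_qMultinomial_sub_one_middle (hq : |q| < 1) (a b c : ℤ) :
    (1 - q ^ (a + b + c)) * qMultinomial q a (b - 1) c = (1 - q ^ b) * qMultinomial q a b c := by
  rw [qMultinomial_swap_right, qMultinomial_swap_right q a b, add_right_comm,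
    one_sub_zpow_mul_qMultinomial_sub_one_right hq]

theorem one_sub_zpow_mul_qMultinomial_sub_one_left (hq : |q| < 1) (a b c : ℤ) :
    (1 - q ^ (a + b + c)) * qMultinomial q (a - 1) b c = (1 - q ^ a) * qMultinomial q a b c := by
  rw [qMultinomial_swap_left, qMultinomial_swap_left q a b, add_comm a b,
    one_sub_zpow_mul_qMultinomial_sub_one_middle hq]

theorem qMultinomial_pascal (hq : |q| < 1) (a b c : ℤ) (h : a + b + c ≠ 0) :
    qMultinomial q a b c = qMultinomial q a b (c - 1)
      + q ^ c * (qMultinomial q a (b - 1) c + qMultinomial q (a - 1) b c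
        - (1 - q ^ (a + b + c - 1)) * qMultinomial q (a - 1) (b - 1) c) := by
  by_cases hneg : a < 0 ∨ b < 0 ∨ c < 0
  · rw [qMultinomial_of_neg q hneg, qMultinomial_of_neg q (c := c - 1) (by omega),
      qMultinomial_of_neg q (b := b - 1) (by omega), qMultinomial_of_neg q (a := a - 1) (by omega),
      qMultinomial_of_neg q (a := a - 1) (by omega)]
    ring
  obtain ⟨a, rfl⟩ := Int.eq_ofNat_of_zero_le (a := a) (by omega)
  obtain ⟨b, rfl⟩ := Int.eq_ofNat_of_zero_le (a := b) (by omega)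
  obtain ⟨c, rfl⟩ := Int.eq_ofNat_of_zero_le (a := c) (by omega)
  have hu : 1 - q ^ ((a : ℤ) + b + c) ≠ 0 := by
    rw [← Nat.cast_add, ← Nat.cast_add, zpow_natCast]
    exact one_sub_pow_ne_zero hq (by omega)
  have hpow : q ^ ((a : ℤ) + b + c) = q ^ (a : ℤ) * q ^ (b : ℤ) * q ^ (c : ℤ) := by
    simp only [← Nat.cast_add, zpow_natCast, pow_add]
  have hr := one_sub_zpow_mul_qMultinomial_sub_one_right hq a b c
  have hm := one_sub_zpow_mul_qMultinomial_sub_one_middle hq a b c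
  have hl := one_sub_zpow_mul_qMultinomial_sub_one_left hq a b c
  have hlm := one_sub_zpow_mul_qMultinomial_sub_one_middle hq (a - 1) b c
  rw [show (a : ℤ) - 1 + b + c = a + b + c - 1 by ring] at hlm
  refine mul_left_cancel₀ hu ?_
  linear_combination -hr - q ^ (c : ℤ) * hm - q ^ (c : ℤ) * q ^ (b : ℤ) * hl
    + q ^ (c : ℤ) * (1 - q ^ ((a : ℤ) + b + c)) * hlm - qMultinomial q a b c * hpow

def qTriTerm (q : ℝ) (n L A j : ℤ) : ℝ :=
  q ^ (j * (j + A - n)) * qMultinomial q j (j + A) (L - 2 * j - A)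

theorem qTri_eq_sum_range_qTriTerm (q : ℝ) (n : ℤ) (L : ℕ) (A : ℤ) {N : ℕ}
    (hN : L + 1 ≤ N) :
    qTri q n L A = ∑ j ∈ range N, qTriTerm q n L A j := by
  have hout : ∀ j ∈ range N, j ∉ range (L + 1) → qTriTerm q n L A j = 0 := by
    intro j _ hj
    rw [mem_range, not_lt] at hj
    rw [qTriTerm, qMultinomial_of_neg q (by omega), mul_zero]
  rw [← sum_subset (range_subset_range.mpr hN) hout, qTri]
  split_ifs with hA
  · refine sum_congr rfl fun j _ => ?_
    rw [qTriTerm, qMultinomial, mul_ite, mul_zero, mul_div_assoc]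
    refine if_congr (by omega) ?_ rfl
    rw [show ((j : ℤ) + (j + A) + (L - 2 * j - A)).toNat = L by omega, Int.toNat_natCast]
  · refine (sum_eq_zero fun j hj => ?_).symm
    rw [mem_range] at hj
    rw [abs_le, not_and_or] at hA
    rw [qTriTerm, qMultinomial_of_neg q (by omega), mul_zero]

theorem sum_range_succ_qTriTerm_sub_one (q : ℝ) (n L A : ℤ) (N : ℕ) :
    ∑ j ∈ range (N + 1), qTriTerm q n L A (j - 1) = ∑ j ∈ range N, qTriTerm q n L A j := by
  rw [sum_range_succ', qTriTerm, qMultinomial_of_neg q (by omega), mul_zero, add_zero]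
  push_cast
  simp only [add_sub_cancel_right]

theorem qTriTerm_recurrence (hq : |q| < 1) (hq0 : q ≠ 0) (L A j : ℤ) (hL : L ≠ 0) :
    qTriTerm q 0 L A j
      = q ^ (L - A) * qTriTerm q 1 (L - 1) (A - 1) j + qTriTerm q 0 (L - 1) A j
        + q ^ (L - 1) * qTriTerm q 1 (L - 1) (A + 1) (j - 1)
        + q ^ (L - 1) * (q ^ (L - 1) - 1) * qTriTerm q 0 (L - 2) A (j - 1) := by
  have hP := qMultinomial_pascal hq j (j + A) (L - 2 * j - A) (by omega)
  rw [show j + (j + A) + (L - 2 * j - A) - 1 = L - 1 by ring] at hP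
  have e0 : qTriTerm q 0 L A j = q ^ (j * (j + A)) * qMultinomial q j (j + A) (L - 2 * j - A) := by
    rw [qTriTerm, sub_zero]
  have e1 : qTriTerm q 1 (L - 1) (A - 1) j
      = q ^ (j * (j + A - 2)) * qMultinomial q j (j + A - 1) (L - 2 * j - A) := by
    rw [qTriTerm]; congr 2 <;> ring
  have e2 : qTriTerm q 0 (L - 1) A j
      = q ^ (j * (j + A)) * qMultinomial q j (j + A) (L - 2 * j - A - 1) := by
    rw [qTriTerm]; congr 2 <;> ring
  have e3 : qTriTerm q 1 (L - 1) (A + 1) (j - 1)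
      = q ^ ((j - 1) * (j + A - 1)) * qMultinomial q (j - 1) (j + A) (L - 2 * j - A) := by
    rw [qTriTerm]; congr 2 <;> ring
  have e4 : qTriTerm q 0 (L - 2) A (j - 1)
      = q ^ ((j - 1) * (j + A - 1)) * qMultinomial q (j - 1) (j + A - 1) (L - 2 * j - A) := by
    rw [qTriTerm]; congr 2 <;> ring
  have hpow₁ : q ^ (L - A) * q ^ (j * (j + A - 2)) = q ^ (j * (j + A)) * q ^ (L - 2 * j - A) := by
    rw [← zpow_add₀ hq0, ← zpow_add₀ hq0]; ring_nf
  have hpow₂ : q ^ (L - 1) * q ^ ((j - 1) * (j + A - 1))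
      = q ^ (j * (j + A)) * q ^ (L - 2 * j - A) := by
    rw [← zpow_add₀ hq0, ← zpow_add₀ hq0]; ring_nf
  rw [e0, e1, e2, e3, e4]
  linear_combination q ^ (j * (j + A)) * hP - qMultinomial q j (j + A - 1) (L - 2 * j - A) * hpow₁
    - (qMultinomial q (j - 1) (j + A) (L - 2 * j - A)
      + (q ^ (L - 1) - 1) * qMultinomial q (j - 1) (j + A - 1) (L - 2 * j - A)) * hpow₂

end

/-- Depth-two recurrence for `T^0`: for `0 < q < 1`, `L ≥ 2` and any integer `A`,
`T^0(L,A) = q^{L-A} T^1(L-1,A-1) + T^0(L-1,A) + q^{L-1} T^1(L-1,A+1)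
  + q^{L-1}(q^{L-1}-1) T^0(L-2,A)`. -/
theorem qTri_depth_two_recurrence_zero (q : ℝ) (hq0 : 0 < q) (hq1 : q < 1)
    (L : ℕ) (hL : 2 ≤ L) (A : ℤ) :
    qTri q 0 L A
      = q ^ ((L : ℤ) - A) * qTri q 1 (L - 1) (A - 1)
        + qTri q 0 (L - 1) A
        + q ^ ((L : ℤ) - 1) * qTri q 1 (L - 1) (A + 1)
        + q ^ ((L : ℤ) - 1) * (q ^ ((L : ℤ) - 1) - 1) * qTri q 0 (L - 2) A := by
  have hq : |q| < 1 := abs_lt.mpr ⟨by linarith, hq1⟩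
  rw [qTri_eq_sum_range_qTriTerm q 0 L A le_rfl,
    qTri_eq_sum_range_qTriTerm q 1 (L - 1) (A - 1) (N := L + 1) (by omega),
    qTri_eq_sum_range_qTriTerm q 0 (L - 1) A (N := L + 1) (by omega),
    qTri_eq_sum_range_qTriTerm q 1 (L - 1) (A + 1) (N := L) (by omega),
    qTri_eq_sum_range_qTriTerm q 0 (L - 2) A (N := L) (by omega),
    ← sum_range_succ_qTriTerm_sub_one q 1 _ (A + 1) L,
    ← sum_range_succ_qTriTerm_sub_one q 0 _ A L,
    show ((L - 1 : ℕ) : ℤ) = L - 1 by omega, show ((L - 2 : ℕ) : ℤ) = L - 2 by omega]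
  simp only [mul_sum, ← sum_add_distrib]
  exact sum_congr rfl fun j _ => qTriTerm_recurrence hq hq0.ne' L A j (by omega)
end
end

section
/- For every real q with 0 < q < 1, every integer L ≥ 2 and every integer A, the q-trinomial coefficients satisfy the depth-two recurrence T^1(L,A) = { T^0(L−1, A−1) + (q^{L−1} − 1) T^0(L−2, A−1) } + T^1(L−1, A) + q^A { T^0(L−1, A+1) + (q^{L−1} − 1) T^0(L−2, A+1) } + q^{L−2}(q^{L−1} − 1) T^1(L−2, A). -/
open Finset

noncomputable section

namespace QTriAux
variable (q : ℝ)

lemma qPoch_pos (hq0 : 0 < q) (hq1 : q < 1) (k : ℕ) : 0 < qPoch q k := by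
  refine Finset.prod_pos fun j _ => ?_
  have : q ^ (j+1) < 1 := pow_lt_one₀ hq0.le hq1 (Nat.succ_ne_zero j)
  linarith

lemma qPoch_ne (hq0 : 0 < q) (hq1 : q < 1) (k : ℕ) : qPoch q k ≠ 0 :=
  (qPoch_pos q hq0 hq1 k).ne'

lemma qPoch_succ (k : ℕ) : qPoch q (k+1) = qPoch q k * (1 - q ^ (k+1)) :=
  Finset.prod_range_succ _ _

def Md (a b c : ℤ) : ℝ :=
  if 0 ≤ a ∧ 0 ≤ b ∧ 0 ≤ c then
    qPoch q (a+b+c).toNat / (qPoch q a.toNat * qPoch q b.toNat * qPoch q c.toNat)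
  else 0

lemma Md_zero_a {a : ℤ} (ha : a < 0) (b c : ℤ) : Md q a b c = 0 := by
  rw [Md, if_neg]; omega
lemma Md_zero_b {b : ℤ} (hb : b < 0) (a c : ℤ) : Md q a b c = 0 := by
  rw [Md, if_neg]; omega
lemma Md_zero_c {c : ℤ} (hc : c < 0) (a b : ℤ) : Md q a b c = 0 := by
  rw [Md, if_neg]; omega

section E
variable (hq0 : 0 < q) (hq1 : q < 1) (a b c : ℕ)

lemma E1 (hq0 : 0 < q) (hq1 : q < 1) (hs : 1 ≤ a + b + c) :
    Md q a b c * (qPoch q a * qPoch q b * qPoch q c)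
      = (1 - q ^ (a+b+c)) * qPoch q (a+b+c-1) := by
  obtain ⟨m, hm⟩ : ∃ m, a + b + c = m + 1 := ⟨a+b+c-1, by omega⟩
  rw [Md, if_pos ⟨by positivity, by positivity, by positivity⟩]
  have h1 : ((a:ℤ) + b + c).toNat = a + b + c := by omega
  rw [h1, hm, show m + 1 - 1 = m from rfl, qPoch_succ,
    show ((a:ℤ)).toNat = a from by omega, show ((b:ℤ)).toNat = b from by omega,
    show ((c:ℤ)).toNat = c from by omega]
  field_simp [qPoch_ne q hq0 hq1]

lemma E2 (hq0 : 0 < q) (hq1 : q < 1) :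
    Md q a ((b:ℤ) - 1) c * (qPoch q a * qPoch q b * qPoch q c)
      = (1 - q ^ b) * qPoch q (a+b+c-1) := by
  cases b with
  | zero => rw [Md_zero_b q (by norm_num)]; simp
  | succ n =>
      rw [Md, if_pos ⟨by positivity, by omega, by positivity⟩]
      rw [show ((a:ℤ) + ((((n+1:ℕ)):ℤ) - 1) + (c:ℤ)).toNat = a + n + c from by push_cast; omega,
        show ((a:ℤ)).toNat = a from by omega,
        show ((((n+1:ℕ)):ℤ) - 1).toNat = n from by push_cast; omega,
        show ((c:ℤ)).toNat = c from by omega,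
        show a + (n+1) + c - 1 = a + n + c from by omega, qPoch_succ]
      field_simp [qPoch_ne q hq0 hq1]

lemma E3 (hq0 : 0 < q) (hq1 : q < 1) :
    Md q a b ((c:ℤ) - 1) * (qPoch q a * qPoch q b * qPoch q c)
      = (1 - q ^ c) * qPoch q (a+b+c-1) := by
  cases c with
  | zero => rw [Md_zero_c q (by norm_num)]; simp
  | succ n =>
      rw [Md, if_pos ⟨by positivity, by positivity, by omega⟩]
      rw [show ((a:ℤ) + (b:ℤ) + ((((n+1:ℕ)):ℤ) - 1)).toNat = a + b + n from by push_cast; omega,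
        show ((a:ℤ)).toNat = a from by omega,
        show ((b:ℤ)).toNat = b from by omega,
        show ((((n+1:ℕ)):ℤ) - 1).toNat = n from by push_cast; omega,
        show a + b + (n+1) - 1 = a + b + n from by omega, qPoch_succ]
      field_simp [qPoch_ne q hq0 hq1]

lemma E4 (hq0 : 0 < q) (hq1 : q < 1) :
    Md q ((a:ℤ) - 1) b c * (qPoch q a * qPoch q b * qPoch q c)
      = (1 - q ^ a) * qPoch q (a+b+c-1) := by
  cases a with
  | zero => rw [Md_zero_a q (by norm_num)]; simp
  | succ n =>
      rw [Md, if_pos ⟨by omega, by positivity, by positivity⟩]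
      rw [show (((((n+1:ℕ)):ℤ) - 1) + (b:ℤ) + (c:ℤ)).toNat = n + b + c from by push_cast; omega,
        show ((((n+1:ℕ)):ℤ) - 1).toNat = n from by push_cast; omega,
        show ((b:ℤ)).toNat = b from by omega,
        show ((c:ℤ)).toNat = c from by omega,
        show (n+1) + b + c - 1 = n + b + c from by omega, qPoch_succ]
      field_simp [qPoch_ne q hq0 hq1]

lemma E5 (hq0 : 0 < q) (hq1 : q < 1) :
    Md q a ((b:ℤ) - 1) ((c:ℤ) - 1) * (qPoch q a * qPoch q b * qPoch q c)
        * (1 - q ^ (a+b+c-1))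
      = (1 - q ^ b) * (1 - q ^ c) * qPoch q (a+b+c-1) := by
  cases b with
  | zero => rw [Md_zero_b q (by norm_num)]; simp
  | succ m =>
    cases c with
    | zero => rw [Md_zero_c q (by norm_num)]; simp
    | succ n =>
      rw [Md, if_pos ⟨by positivity, by omega, by omega⟩]
      rw [show ((a:ℤ) + ((((m+1:ℕ)):ℤ) - 1) + ((((n+1:ℕ)):ℤ) - 1)).toNat = a + m + n from by
          push_cast; omega,
        show ((a:ℤ)).toNat = a from by omega,
        show ((((m+1:ℕ)):ℤ) - 1).toNat = m from by push_cast; omega,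
        show ((((n+1:ℕ)):ℤ) - 1).toNat = n from by push_cast; omega,
        show a + (m+1) + (n+1) - 1 = (a + m + n) + 1 from by omega,
        qPoch_succ q (a+m+n), qPoch_succ q m, qPoch_succ q n]
      rw [show a + m + n + 1 = a + (m+1) + (n+1) - 1 from by omega]
      field_simp [qPoch_ne q hq0 hq1]

lemma E6 (hq0 : 0 < q) (hq1 : q < 1) :
    Md q ((a:ℤ) - 1) b ((c:ℤ) - 1) * (qPoch q a * qPoch q b * qPoch q c)
        * (1 - q ^ (a+b+c-1))
      = (1 - q ^ a) * (1 - q ^ c) * qPoch q (a+b+c-1) := by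
  cases a with
  | zero => rw [Md_zero_a q (by norm_num)]; simp
  | succ m =>
    cases c with
    | zero => rw [Md_zero_c q (by norm_num)]; simp
    | succ n =>
      rw [Md, if_pos ⟨by omega, by positivity, by omega⟩]
      rw [show (((((m+1:ℕ)):ℤ) - 1) + (b:ℤ) + ((((n+1:ℕ)):ℤ) - 1)).toNat = m + b + n from by
          push_cast; omega,
        show ((((m+1:ℕ)):ℤ) - 1).toNat = m from by push_cast; omega,
        show ((b:ℤ)).toNat = b from by omega,
        show ((((n+1:ℕ)):ℤ) - 1).toNat = n from by push_cast; omega,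
        show (m+1) + b + (n+1) - 1 = (m + b + n) + 1 from by omega,
        qPoch_succ q (m+b+n), qPoch_succ q m, qPoch_succ q n]
      rw [show m + b + n + 1 = (m+1) + b + (n+1) - 1 from by omega]
      field_simp [qPoch_ne q hq0 hq1]

lemma E7 (hq0 : 0 < q) (hq1 : q < 1) :
    Md q ((a:ℤ) - 1) ((b:ℤ) - 1) c * (qPoch q a * qPoch q b * qPoch q c)
        * (1 - q ^ (a+b+c-1))
      = (1 - q ^ a) * (1 - q ^ b) * qPoch q (a+b+c-1) := by
  cases a with
  | zero => rw [Md_zero_a q (by norm_num)]; simp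
  | succ m =>
    cases b with
    | zero => rw [Md_zero_b q (by norm_num)]; simp
    | succ n =>
      rw [Md, if_pos ⟨by omega, by omega, by positivity⟩]
      rw [show (((((m+1:ℕ)):ℤ) - 1) + ((((n+1:ℕ)):ℤ) - 1) + (c:ℤ)).toNat = m + n + c from by
          push_cast; omega,
        show ((((m+1:ℕ)):ℤ) - 1).toNat = m from by push_cast; omega,
        show ((((n+1:ℕ)):ℤ) - 1).toNat = n from by push_cast; omega,
        show ((c:ℤ)).toNat = c from by omega,
        show (m+1) + (n+1) + c - 1 = (m + n + c) + 1 from by omega,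
        qPoch_succ q (m+n+c), qPoch_succ q m, qPoch_succ q n]
      rw [show m + n + c + 1 = (m+1) + (n+1) + c - 1 from by omega]
      field_simp [qPoch_ne q hq0 hq1]

end E
lemma key (hq0 : 0 < q) (hq1 : q < 1) (a b c : ℤ) (hs : 2 ≤ a + b + c) :
    Md q a b c
      = Md q a (b-1) c + Md q a b (c-1) + Md q (a-1) b c
        + (q ^ (a+b+c-1) - 1) *
            (Md q a (b-1) (c-1) + Md q (a-1) b (c-1) + q ^ c * Md q (a-1) (b-1) c) := by
  by_cases ha : 0 ≤ a
  · by_cases hb : 0 ≤ b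
    · by_cases hc : 0 ≤ c
      · -- main case
        lift a to ℕ using ha
        lift b to ℕ using hb
        lift c to ℕ using hc
        have hs' : 2 ≤ a + b + c := by exact_mod_cast hs
        obtain ⟨m, hm⟩ : ∃ m, a + b + c = m + 2 := ⟨a+b+c-2, by omega⟩
        rw [show (a:ℤ) + b + c - 1 = ((m+1 : ℕ) : ℤ) from by push_cast; omega,
          zpow_natCast, show (q : ℝ) ^ (c:ℤ) = q ^ c from by
            rw [← zpow_natCast q c]]
        have hD : qPoch q a * qPoch q b * qPoch q c ≠ 0 :=
          mul_ne_zero (mul_ne_zero (qPoch_ne q hq0 hq1 a) (qPoch_ne q hq0 hq1 b))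
            (qPoch_ne q hq0 hq1 c)
        have hW : (1 : ℝ) - q ^ (m+1) ≠ 0 := by
          have : q ^ (m+1) < 1 := pow_lt_one₀ hq0.le hq1 (Nat.succ_ne_zero m)
          linarith
        have H1 := E1 q a b c hq0 hq1 (by omega)
        have H2 := E2 q a b c hq0 hq1
        have H3 := E3 q a b c hq0 hq1
        have H4 := E4 q a b c hq0 hq1
        have H5 := E5 q a b c hq0 hq1
        have H6 := E6 q a b c hq0 hq1
        have H7 := E7 q a b c hq0 hq1
        rw [hm, show m + 2 - 1 = m + 1 from rfl] at H1 H2 H3 H4 H5 H6 H7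
        have Hx : q ^ a * q ^ b * q ^ c = q ^ (m+2) := by
          rw [← pow_add, ← pow_add, hm]
        apply mul_right_cancel₀ (b := (qPoch q a * qPoch q b * qPoch q c) * (1 - q ^ (m+1)))
          (mul_ne_zero hD hW)
        linear_combination (1 - q^(m+1)) * H1 - (1 - q^(m+1)) * H2 - (1 - q^(m+1)) * H3
          - (1 - q^(m+1)) * H4 - (q^(m+1) - 1) * H5 - (q^(m+1) - 1) * H6
          - (q^(m+1) - 1) * q^c * H7
          + (1 - q^(m+1)) * qPoch q (m+1) * Hx
      · simp only [Md_zero_c q (show c < 0 from by omega),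
          Md_zero_c q (show c - 1 < 0 from by omega)]
        ring
    · simp only [Md_zero_b q (show b < 0 from by omega),
        Md_zero_b q (show b - 1 < 0 from by omega)]
      ring
  · simp only [Md_zero_a q (show a < 0 from by omega),
      Md_zero_a q (show a - 1 < 0 from by omega)]
    ring
/-- term function -/
def tf (n : ℤ) (L : ℕ) (A : ℤ) (j : ℤ) : ℝ :=
  q ^ (j * (j + A - n)) * Md q j (j + A) ((L:ℤ) - 2*j - A)

lemma tf_zero_of_lt {L : ℕ} {j : ℤ} (h : (L:ℤ) < j) (n A : ℤ) : tf q n L A j = 0 := by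
  rw [tf, Md, if_neg, mul_zero]; omega

lemma tf_zero_of_neg {j : ℤ} (h : j < 0) (n : ℤ) (L : ℕ) (A : ℤ) : tf q n L A j = 0 := by
  rw [tf, Md, if_neg, mul_zero]; omega

lemma qTri_eq (n : ℤ) (L : ℕ) (A : ℤ) :
    qTri q n L A = ∑ j ∈ Finset.range (L + 1), tf q n L A (j : ℤ) := by
  rw [qTri]
  by_cases hA : |A| ≤ (L : ℤ)
  · rw [if_pos hA]
    refine Finset.sum_congr rfl fun j hj => ?_
    rw [tf, Md]
    by_cases h : 0 ≤ (j : ℤ) + A ∧ 0 ≤ (L : ℤ) - 2 * j - A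
    · rw [if_pos h, if_pos ⟨by positivity, h.1, h.2⟩,
        show (j:ℤ) + ((j:ℤ) + A) + ((L:ℤ) - 2*j - A) = (L:ℤ) from by ring,
        Int.toNat_natCast, Int.toNat_natCast, mul_div_assoc]
    · rw [if_neg h, if_neg (by tauto), mul_zero]
  · rw [if_neg hA]
    rw [abs_le, not_and_or, not_le, not_le] at hA
    symm
    refine Finset.sum_eq_zero fun j hj => ?_
    have hj' : j ≤ L := by simpa [Nat.lt_succ_iff] using Finset.mem_range.mp hj
    rw [tf, Md, if_neg, mul_zero]
    omega

lemma qTri_eq_ext (n : ℤ) {L' L : ℕ} (h : L' ≤ L) (A : ℤ) :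
    qTri q n L' A = ∑ j ∈ Finset.range (L + 1), tf q n L' A (j : ℤ) := by
  rw [qTri_eq]
  refine Finset.sum_subset (Finset.range_subset_range.2 (by omega)) fun x hx hnx => ?_
  refine tf_zero_of_lt q ?_ n A
  simp only [Finset.mem_range] at hx hnx
  omega

lemma qTri_eq_shift (n : ℤ) {L' L : ℕ} (h : L' < L) (A : ℤ) :
    qTri q n L' A = ∑ j ∈ Finset.range (L + 1), tf q n L' A ((j : ℤ) - 1) := by
  rw [qTri_eq_ext q n (show L' ≤ L - 1 from by omega) A]
  rw [Finset.sum_range_succ' (fun j => tf q n L' A ((j : ℤ) - 1)) L]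
  simp only [Nat.cast_add, Nat.cast_one, add_sub_cancel_right, Nat.cast_zero]
  rw [tf_zero_of_neg q (by norm_num) n L' A, add_zero]
  refine (Finset.sum_subset (Finset.range_subset_range.2 (by omega)) fun x hx hnx => ?_).symm
  refine tf_zero_of_lt q ?_ n A
  simp only [Finset.mem_range] at hx hnx
  omega
lemma tf_key (hq0 : 0 < q) (hq1 : q < 1) (M : ℕ) (A j : ℤ) :
    tf q 1 (M+2) A j
      = tf q 0 (M+1) (A-1) j + (q ^ ((M:ℤ)+1) - 1) * tf q 0 M (A-1) j
        + tf q 1 (M+1) A j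
        + q ^ A * (tf q 0 (M+1) (A+1) (j-1) + (q ^ ((M:ℤ)+1) - 1) * tf q 0 M (A+1) (j-1))
        + q ^ (M:ℤ) * (q ^ ((M:ℤ)+1) - 1) * tf q 1 M A (j-1) := by
  have hqne : q ≠ 0 := hq0.ne'
  have K := key q hq0 hq1 j (j + A) (((M:ℤ)+2) - 2*j - A) (by omega)
  simp only [tf]
  push_cast
  rw [show (j:ℤ) + (A-1) = j + A - 1 from by ring,
    show (M:ℤ) + 1 - 2*j - (A-1) = ((M:ℤ)+2) - 2*j - A from by ring,
    show (M:ℤ) - 2*j - (A-1) = ((M:ℤ)+2) - 2*j - A - 1 from by ring,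
    show (M:ℤ) + 1 - 2*j - A = ((M:ℤ)+2) - 2*j - A - 1 from by ring,
    show (j:ℤ) - 1 + (A+1) = j + A from by ring,
    show (M:ℤ) + 1 - 2*(j-1) - (A+1) = ((M:ℤ)+2) - 2*j - A from by ring,
    show (M:ℤ) - 2*(j-1) - (A+1) = ((M:ℤ)+2) - 2*j - A - 1 from by ring,
    show (j:ℤ) - 1 + A = j + A - 1 from by ring,
    show (M:ℤ) - 2*(j-1) - A = ((M:ℤ)+2) - 2*j - A from by ring,
    show j * (j + A - 1 - 0) = j * (j + A - 1) from by ring,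
    show ((j:ℤ) - 1) * (j + A - 0) = (j - 1) * (j + A) from by ring,
    show ((j:ℤ) - 1) * (j + A - 1 - 1) = (j - 1) * (j + A - 2) from by ring]
  rw [show j + (j+A) + (((M:ℤ)+2) - 2*j - A) - 1 = (M:ℤ)+1 from by ring] at K
  set c : ℤ := ((M:ℤ)+2) - 2*j - A with hc
  have h1 : q ^ A * q ^ ((j-1)*(j+A)) = q ^ (j*(j+A-1)) := by
    rw [← zpow_add₀ hqne]; congr 1; ring
  have h2 : q ^ (M:ℤ) * q ^ ((j-1)*(j+A-2)) = q ^ (j*(j+A-1)) * q ^ c := by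
    rw [← zpow_add₀ hqne, ← zpow_add₀ hqne]; congr 1; rw [hc]; ring
  linear_combination q ^ (j * (j + A - 1)) * K
    - (Md q (j-1) (j+A) c + (q^((M:ℤ)+1)-1) * Md q (j-1) (j+A) (c-1)) * h1
    - (q^((M:ℤ)+1)-1) * Md q (j-1) (j+A-1) c * h2

end QTriAux

/-- Depth-two recurrence for `T^1`: for `0 < q < 1`, `L ≥ 2` and any integer `A`,
`T^1(L,A) = {T^0(L-1,A-1) + (q^{L-1}-1) T^0(L-2,A-1)} + T^1(L-1,A)
  + q^A {T^0(L-1,A+1) + (q^{L-1}-1) T^0(L-2,A+1)} + q^{L-2}(q^{L-1}-1) T^1(L-2,A)`. -/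
theorem qTri_depth_two_recurrence_one (q : ℝ) (hq0 : 0 < q) (hq1 : q < 1)
    (L : ℕ) (hL : 2 ≤ L) (A : ℤ) :
    qTri q 1 L A
      = (qTri q 0 (L - 1) (A - 1) + (q ^ ((L : ℤ) - 1) - 1) * qTri q 0 (L - 2) (A - 1))
        + qTri q 1 (L - 1) A
        + q ^ A * (qTri q 0 (L - 1) (A + 1) + (q ^ ((L : ℤ) - 1) - 1) * qTri q 0 (L - 2) (A + 1))
        + q ^ ((L : ℤ) - 2) * (q ^ ((L : ℤ) - 1) - 1) * qTri q 1 (L - 2) A := by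
  obtain ⟨M, rfl⟩ : ∃ M, L = M + 2 := ⟨L - 2, by omega⟩
  rw [show M + 2 - 1 = M + 1 from by omega, show M + 2 - 2 = M from by omega,
    show ((M + 2 : ℕ) : ℤ) - 1 = (M : ℤ) + 1 from by push_cast; ring,
    show ((M + 2 : ℕ) : ℤ) - 2 = (M : ℤ) from by push_cast; ring]
  rw [QTriAux.qTri_eq q 1 (M+2) A,
    QTriAux.qTri_eq_ext q 0 (show M + 1 ≤ M + 2 from by omega) (A-1),
    QTriAux.qTri_eq_ext q 0 (show M ≤ M + 2 from by omega) (A-1),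
    QTriAux.qTri_eq_ext q 1 (show M + 1 ≤ M + 2 from by omega) A,
    QTriAux.qTri_eq_shift q 0 (show M + 1 < M + 2 from by omega) (A+1),
    QTriAux.qTri_eq_shift q 0 (show M < M + 2 from by omega) (A+1),
    QTriAux.qTri_eq_shift q 1 (show M < M + 2 from by omega) A]
  rw [show (∑ j ∈ Finset.range (M + 2 + 1), QTriAux.tf q 1 (M+2) A (j : ℤ))
      = ∑ j ∈ Finset.range (M + 2 + 1),
          (QTriAux.tf q 0 (M+1) (A-1) (j : ℤ)
            + (q ^ ((M:ℤ)+1) - 1) * QTriAux.tf q 0 M (A-1) (j : ℤ)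
            + QTriAux.tf q 1 (M+1) A (j : ℤ)
            + q ^ A * (QTriAux.tf q 0 (M+1) (A+1) ((j : ℤ)-1)
                + (q ^ ((M:ℤ)+1) - 1) * QTriAux.tf q 0 M (A+1) ((j : ℤ)-1))
            + q ^ (M:ℤ) * (q ^ ((M:ℤ)+1) - 1) * QTriAux.tf q 1 M A ((j : ℤ)-1)) from
      Finset.sum_congr rfl fun j _ => QTriAux.tf_key q hq0 hq1 M A (j : ℤ)]
  rw [Finset.sum_add_distrib, Finset.sum_add_distrib, Finset.sum_add_distrib,
    Finset.sum_add_distrib, ← Finset.mul_sum, ← Finset.mul_sum, ← Finset.mul_sum,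
    Finset.sum_add_distrib, ← Finset.mul_sum]
end
end

section
/- Let p ≥ 4 be an integer and 1 ≤ a ≤ p−1. For every integer L ≥ 0 and every real q with 0 < q < 1, the reflection property B^p_{a,p−1}(L,p) = B^p_{p−a,1}(L,1) holds. -/
open Finset

noncomputable section

/-- Bosonic polynomial `B^p_{a,b}(L,s)`. -/
def Bpoly (q : ℝ) (p a b s : ℤ) (L : ℕ) : ℝ :=
  ∑' j : ℤ,
    (q ^ (p * (p + 1) * j ^ 2 + j * ((p + 1) * a - p * s)) * qTri q 0 L (2 * p * j + a - b)
      - q ^ ((p * j + a) * ((p + 1) * j + s)) * qTri q 0 L (2 * p * j + a + b))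

/-- Bosonic polynomial `B̃^p_{a,b}(L,s)`. -/
def Btpoly (q : ℝ) (p a b s : ℤ) (L : ℕ) : ℝ :=
  ∑' j : ℤ,
    (q ^ (p * (p + 1) * j ^ 2 + j * ((p + 1) * a - p * s)) * qTri q 1 L (2 * p * j + a - b)
      - q ^ (p * (p + 1) * j ^ 2 + j * ((p + 1) * a + p * (s - 2)) + a * (s - 1) - b)
        * qTri q 1 L (2 * p * j + a + b))

lemma qTri_eq_zero (q : ℝ) (n : ℤ) (L : ℕ) (A : ℤ) (h : (L : ℤ) < |A|) :
    qTri q n L A = 0 := if_neg (not_le.mpr h)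

lemma qTri_neg (q : ℝ) (L : ℕ) (A : ℤ) : qTri q 0 L (-A) = qTri q 0 L A := by
  unfold qTri
  rw [abs_neg]
  split_ifs with h
  · rw [← Finset.sum_filter, ← Finset.sum_filter]
    refine Finset.sum_nbij' (fun j => ((j : ℤ) - A).toNat) (fun j => ((j : ℤ) + A).toNat)
      ?_ ?_ ?_ ?_ ?_
    · intro x hx
      simp only [Finset.mem_filter, Finset.mem_range] at hx ⊢
      omega
    · intro x hx
      simp only [Finset.mem_filter, Finset.mem_range] at hx ⊢
      omega
    · intro x hx
      simp only [Finset.mem_filter, Finset.mem_range] at hx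
      beta_reduce
      omega
    · intro x hx
      simp only [Finset.mem_filter, Finset.mem_range] at hx
      beta_reduce
      omega
    · intro x hx
      simp only [Finset.mem_filter, Finset.mem_range] at hx
      obtain ⟨hx1, hx2, hx3⟩ := hx
      have h1 : ((((x : ℤ) - A).toNat : ℤ)) = (x : ℤ) - A := Int.toNat_of_nonneg (by omega)
      rw [h1]
      have h2 : (((x : ℤ) - A) + A).toNat = x := by omega
      have h3 : ((L : ℤ) - 2 * ((x:ℤ) - A) - A).toNat = ((L : ℤ) - 2 * x + A).toNat := by omega
      have h4 : ((x:ℤ) + -A).toNat = ((x : ℤ) - A).toNat := by omega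
      have h5 : ((L:ℤ) - 2*x - -A).toNat = ((L : ℤ) - 2 * x + A).toNat := by omega
      rw [h2, h3, h4, h5]
      have he : (x : ℤ) * ((x : ℤ) + -A - 0) = ((x:ℤ) - A) * ((x:ℤ) - A + A - 0) := by ring
      rw [he]
      ring
  · rfl

lemma summable_term (q : ℝ) (p : ℤ) (hp : 1 ≤ p) (L : ℕ) (g : ℤ → ℝ) (c : ℤ → ℤ) (d : ℤ)
    (hc : ∀ j, c j = 2 * p * j + d) :
    Summable (fun j : ℤ => g j * qTri q 0 L (c j)) := by
  apply summable_of_ne_finset_zero (s := Finset.Icc (-((L : ℤ) + |d|)) ((L : ℤ) + |d|))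
  intro j hj
  have h1 : (L : ℤ) + |d| < |j| := by
    simp only [Finset.mem_Icc, not_and_or, not_le] at hj
    rw [lt_abs]
    omega
  have h2 : |2 * p * j| ≤ |2 * p * j + d| + |d| := by
    calc |2 * p * j| = |(2 * p * j + d) + (-d)| := by ring_nf
    _ ≤ |2 * p * j + d| + |(-d)| := abs_add_le _ _
    _ = |2 * p * j + d| + |d| := by rw [abs_neg]
  have h3 : |2 * p * j| = 2 * p * |j| := by
    rw [abs_mul, abs_of_nonneg (by omega : (0:ℤ) ≤ 2 * p)]
  have h4 : (L : ℤ) < |2 * p * j + d| := by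
    have hj0 : (0:ℤ) ≤ |j| := abs_nonneg j
    have hd0 : (0:ℤ) ≤ |d| := abs_nonneg d
    nlinarith
  rw [hc, qTri_eq_zero _ _ _ _ h4, mul_zero]

/-- Reflection property: for integers `p ≥ 4`, `1 ≤ a ≤ p-1`, every `L ≥ 0` and
`0 < q < 1`: `B^p_{a,p-1}(L,p) = B^p_{p-a,1}(L,1)`. -/
theorem Bpoly_reflection (p a : ℤ) (hp : 4 ≤ p) (ha1 : 1 ≤ a) (ha2 : a ≤ p - 1)
    (L : ℕ) (q : ℝ) (hq0 : 0 < q) (hq1 : q < 1) :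
    Bpoly q p a (p - 1) p L = Bpoly q p (p - a) 1 1 L := by
  set G1 : ℤ → ℝ := fun j =>
    q ^ (p * (p + 1) * j ^ 2 + j * ((p + 1) * (p - a) - p * 1)) *
      qTri q 0 L (2 * p * j + (p - a) - 1) with hG1
  set G2 : ℤ → ℝ := fun j =>
    q ^ ((p * j + (p - a)) * ((p + 1) * j + 1)) * qTri q 0 L (2 * p * j + (p - a) + 1) with hG2
  have hsum1 : Summable G1 :=
    summable_term q p (by omega) L _ _ (p - a - 1) (fun j => by ring)
  have hsum2 : Summable G2 :=
    summable_term q p (by omega) L _ _ (p - a + 1) (fun j => by ring)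
  have key : ∀ j : ℤ,
      q ^ (p * (p + 1) * j ^ 2 + j * ((p + 1) * a - p * p)) * qTri q 0 L (2 * p * j + a - (p - 1))
        - q ^ ((p * j + a) * ((p + 1) * j + p)) * qTri q 0 L (2 * p * j + a + (p - 1))
      = G1 (-j) - G2 (-j - 1) := by
    intro j
    rw [hG1, hG2]
    have e1 : p * (p + 1) * (-j) ^ 2 + (-j) * ((p + 1) * (p - a) - p * 1)
        = p * (p + 1) * j ^ 2 + j * ((p + 1) * a - p * p) := by ring
    have a1 : 2 * p * (-j) + (p - a) - 1 = -(2 * p * j + a - (p - 1)) := by ring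
    have e2 : (p * (-j - 1) + (p - a)) * ((p + 1) * (-j - 1) + 1)
        = (p * j + a) * ((p + 1) * j + p) := by ring
    have a2 : 2 * p * (-j - 1) + (p - a) + 1 = -(2 * p * j + a + (p - 1)) := by ring
    simp only [e1, a1, e2, a2, qTri_neg]
  calc Bpoly q p a (p - 1) p L
      = ∑' j : ℤ, (G1 (-j) - G2 (-j - 1)) := tsum_congr key
    _ = ∑' j : ℤ, (G1 j - G2 (j - 1)) :=
        (Equiv.neg ℤ).tsum_eq (fun j => G1 j - G2 (j - 1))
    _ = (∑' j : ℤ, G1 j) - ∑' j : ℤ, G2 (j - 1) :=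
        Summable.tsum_sub hsum1 (hsum2.comp_injective (sub_left_injective))
    _ = (∑' j : ℤ, G1 j) - ∑' j : ℤ, G2 j := by
        rw [show (∑' j : ℤ, G2 (j - 1)) = ∑' j : ℤ, G2 j from (Equiv.subRight (1 : ℤ)).tsum_eq G2]
    _ = ∑' j : ℤ, (G1 j - G2 j) := (Summable.tsum_sub hsum1 hsum2).symm
    _ = Bpoly q p (p - a) 1 1 L := rfl
end
end

section
/- Let p ≥ 4 be an integer and 1 ≤ a ≤ p−1. For every integer L ≥ 0 and every real q with 0 < q < 1, the reflection property B̃^p_{a,p−1}(L,p+1) = q^{a−p+1} B^p_{p−a,1}(L,2) holds. -/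
open Finset

noncomputable section

/-! ### Auxiliary machinery for the reflection property -/

namespace BtReflAux

variable {q : ℝ}

/-- The `j`-th term of the sum defining `qTri`. -/
def triTerm (q : ℝ) (n : ℤ) (L : ℕ) (A : ℤ) (j : ℕ) : ℝ :=
  if 0 ≤ (j : ℤ) + A ∧ 0 ≤ (L : ℤ) - 2 * j - A then
    q ^ ((j : ℤ) * ((j : ℤ) + A - n)) * qPoch q L /
      (qPoch q j * qPoch q (((j : ℤ) + A).toNat) * qPoch q (((L : ℤ) - 2 * j - A).toNat))
  else 0

lemma qPoch_pos (hq0 : 0 < q) (hq1 : q < 1) (k : ℕ) : 0 < qPoch q k := by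
  refine Finset.prod_pos fun j _ => ?_
  have h : q ^ (j + 1) < 1 := pow_lt_one₀ hq0.le hq1 (Nat.succ_ne_zero j)
  linarith

lemma qPoch_succ (q : ℝ) (k : ℕ) : qPoch q (k + 1) = qPoch q k * (1 - q ^ (k + 1)) :=
  Finset.prod_range_succ _ _

lemma one_sub_pow_pos (hq0 : 0 < q) (hq1 : q < 1) (k : ℕ) : 0 < 1 - q ^ (k + 1) := by
  have h : q ^ (k + 1) < 1 := pow_lt_one₀ hq0.le hq1 (Nat.succ_ne_zero k)
  linarith

lemma triTerm_zero_of_gt {n : ℤ} {L : ℕ} {A : ℤ} {j : ℕ} (h : L < j) :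
    triTerm q n L A j = 0 := by
  rw [triTerm, if_neg]
  rintro ⟨h1, h2⟩
  omega

lemma triTerm_zero_of_abs {n : ℤ} {L : ℕ} {A : ℤ} (h : ¬ |A| ≤ (L : ℤ)) (j : ℕ) :
    triTerm q n L A j = 0 := by
  rw [triTerm, if_neg]
  rintro ⟨h1, h2⟩
  exact h (abs_le.mpr ⟨by omega, by omega⟩)

lemma qTri_zero {n : ℤ} {L : ℕ} {A : ℤ} (h : ¬ |A| ≤ (L : ℤ)) : qTri q n L A = 0 :=
  if_neg h

lemma qTri_eq_sum (n : ℤ) (L : ℕ) (A : ℤ) {N : ℕ} (hN : L + 1 ≤ N) :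
    qTri q n L A = ∑ j ∈ Finset.range N, triTerm q n L A j := by
  have hbody : qTri q n L A
      = if |A| ≤ (L : ℤ) then ∑ j ∈ Finset.range (L + 1), triTerm q n L A j else 0 := rfl
  rw [hbody]
  split_ifs with h
  · refine Finset.sum_subset (Finset.range_subset_range.2 hN) fun j _ hj => ?_
    refine triTerm_zero_of_gt ?_
    simp only [Finset.mem_range, not_lt] at hj
    omega
  · exact (Finset.sum_eq_zero fun j _ => triTerm_zero_of_abs h j).symm

/-! ### Symmetry of `T^0` -/

lemma qTri_even_aux (L : ℕ) (a : ℕ) : qTri q 0 L (-(a : ℤ)) = qTri q 0 L (a : ℤ) := by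
  rw [qTri_eq_sum 0 L (-(a : ℤ)) (N := a + (L + 1)) (by omega),
      qTri_eq_sum 0 L (a : ℤ) (N := L + 1) le_rfl, Finset.sum_range_add]
  have h0 : ∑ i ∈ Finset.range a, triTerm q 0 L (-(a : ℤ)) i = 0 := by
    refine Finset.sum_eq_zero fun i hi => ?_
    rw [triTerm, if_neg]
    rintro ⟨h1, h2⟩
    simp only [Finset.mem_range] at hi
    omega
  rw [h0, zero_add]
  refine Finset.sum_congr rfl fun i _ => ?_
  rw [triTerm, triTerm]
  by_cases h : 0 ≤ (i : ℤ) + (a : ℤ) ∧ 0 ≤ (L : ℤ) - 2 * (i : ℤ) - (a : ℤ)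
  · have hL : 0 ≤ ((a + i : ℕ) : ℤ) + -(a : ℤ) ∧
        0 ≤ (L : ℤ) - 2 * ((a + i : ℕ) : ℤ) - -(a : ℤ) := by
      push_cast
      omega
    rw [if_pos hL, if_pos h,
      show ((a + i : ℕ) : ℤ) * (((a + i : ℕ) : ℤ) + -(a : ℤ) - 0)
          = (i : ℤ) * ((i : ℤ) + (a : ℤ) - 0) from by push_cast; ring,
      show (((a + i : ℕ) : ℤ) + -(a : ℤ)).toNat = i from by omega,
      show ((L : ℤ) - 2 * ((a + i : ℕ) : ℤ) - -(a : ℤ)).toNat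
          = ((L : ℤ) - 2 * (i : ℤ) - (a : ℤ)).toNat from by omega,
      show (((i : ℤ) + (a : ℤ)).toNat) = a + i from by omega]
    ring
  · have hL : ¬ (0 ≤ ((a + i : ℕ) : ℤ) + -(a : ℤ) ∧
        0 ≤ (L : ℤ) - 2 * ((a + i : ℕ) : ℤ) - -(a : ℤ)) := by
      push_cast
      push_cast at h
      omega
    rw [if_neg hL, if_neg h]

lemma qTri_even (L : ℕ) (A : ℤ) : qTri q 0 L (-A) = qTri q 0 L A := by
  rcases le_or_gt 0 A with h | h
  · obtain ⟨n, rfl⟩ : ∃ n : ℕ, A = (n : ℤ) := ⟨A.toNat, by omega⟩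
    exact qTri_even_aux L n
  · obtain ⟨n, rfl⟩ : ∃ n : ℕ, A = -(n : ℤ) := ⟨(-A).toNat, by omega⟩
    rw [neg_neg]
    exact (qTri_even_aux L n).symm

/-! ### The key relation between `T^1` and `T^0` -/

private lemma alg2 (b1 e1 b2 e2 X D : ℝ) (h : b1 * e1 = b2 * e2) :
    (0 : ℝ) - b1 * (e1 * X / D) = 0 - b2 * (e2 * X / D) := by
  rw [show b1 * (e1 * X / D) = b1 * e1 * (X / D) from by ring,
      show b2 * (e2 * X / D) = b2 * e2 * (X / D) from by ring, h]

private lemma alg (x1 x2 x3 x4 b c X Pm Pt PK u v : ℝ) (hPm : Pm ≠ 0) (hPt : Pt ≠ 0)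
    (hPK : PK ≠ 0) (hu : 1 - u ≠ 0) (hv : 1 - v ≠ 0)
    (h2 : x2 = x1 * u) (h3 : b * x3 = x1) (h4 : c * x4 = x1 * v) :
    x1 * X / (Pm * (1 - u) * Pt * PK) - b * (x3 * X / (Pm * (Pt * (1 - v)) * PK))
      = x2 * X / (Pm * (1 - u) * Pt * PK) - c * (x4 * X / (Pm * (Pt * (1 - v)) * PK)) := by
  rw [show b * (x3 * X / (Pm * (Pt * (1 - v)) * PK))
        = (b * x3) * X / (Pm * (Pt * (1 - v)) * PK) from by ring,
      show c * (x4 * X / (Pm * (Pt * (1 - v)) * PK))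
        = (c * x4) * X / (Pm * (Pt * (1 - v)) * PK) from by ring,
      h3, h4, h2]
  field_simp
  ring

lemma key_term (hq0 : 0 < q) (hq1 : q < 1) (L : ℕ) (B : ℤ) (m : ℕ) :
    triTerm q 1 L B (m + 1) - q ^ B * triTerm q 1 L (B + 2) m
      = triTerm q 0 L B (m + 1) - q ^ (2 * B + 2) * triTerm q 0 L (B + 2) m := by
  have hqne : q ≠ 0 := ne_of_gt hq0
  rw [triTerm, triTerm, triTerm, triTerm]
  by_cases hK : 0 ≤ (L : ℤ) - 2 * (m : ℤ) - (B + 2)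
  · by_cases h1 : 0 ≤ (m : ℤ) + 1 + B
    · obtain ⟨t, ht⟩ : ∃ t : ℕ, (t : ℤ) = (m : ℤ) + 1 + B := ⟨((m : ℤ) + 1 + B).toNat, by omega⟩
      obtain ⟨K, hKK⟩ : ∃ K : ℕ, (K : ℤ) = (L : ℤ) - 2 * (m : ℤ) - (B + 2) :=
        ⟨_, Int.toNat_of_nonneg hK⟩
      rw [if_pos (⟨by push_cast; omega, by push_cast; omega⟩ :
            0 ≤ ((m + 1 : ℕ) : ℤ) + B ∧ 0 ≤ (L : ℤ) - 2 * ((m + 1 : ℕ) : ℤ) - B),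
          if_pos (⟨by push_cast; omega, by push_cast; omega⟩ :
            0 ≤ ((m : ℕ) : ℤ) + (B + 2) ∧ 0 ≤ (L : ℤ) - 2 * ((m : ℕ) : ℤ) - (B + 2)),
          if_pos (⟨by push_cast; omega, by push_cast; omega⟩ :
            0 ≤ ((m + 1 : ℕ) : ℤ) + B ∧ 0 ≤ (L : ℤ) - 2 * ((m + 1 : ℕ) : ℤ) - B),
          if_pos (⟨by push_cast; omega, by push_cast; omega⟩ :
            0 ≤ ((m : ℕ) : ℤ) + (B + 2) ∧ 0 ≤ (L : ℤ) - 2 * ((m : ℕ) : ℤ) - (B + 2)),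
          show (((m + 1 : ℕ) : ℤ) + B).toNat = t from by omega,
          show (((m : ℕ) : ℤ) + (B + 2)).toNat = t + 1 from by omega,
          show ((L : ℤ) - 2 * ((m + 1 : ℕ) : ℤ) - B).toNat = K from by omega,
          show ((L : ℤ) - 2 * ((m : ℕ) : ℤ) - (B + 2)).toNat = K from by omega,
          qPoch_succ q m, qPoch_succ q t]
      have hz2 : q ^ (((m + 1 : ℕ) : ℤ) * (((m + 1 : ℕ) : ℤ) + B - 0))
          = q ^ (((m + 1 : ℕ) : ℤ) * (((m + 1 : ℕ) : ℤ) + B - 1)) * q ^ (m + 1) := by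
        rw [← zpow_natCast q (m + 1), ← zpow_add₀ hqne]
        congr 1
        push_cast
        ring
      have hz3 : q ^ B * q ^ (((m : ℕ) : ℤ) * (((m : ℕ) : ℤ) + (B + 2) - 1))
          = q ^ (((m + 1 : ℕ) : ℤ) * (((m + 1 : ℕ) : ℤ) + B - 1)) := by
        rw [← zpow_add₀ hqne]
        congr 1
        push_cast
        ring
      have hz4 : q ^ (2 * B + 2) * q ^ (((m : ℕ) : ℤ) * (((m : ℕ) : ℤ) + (B + 2) - 0))
          = q ^ (((m + 1 : ℕ) : ℤ) * (((m + 1 : ℕ) : ℤ) + B - 1)) * q ^ (t + 1) := by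
        rw [← zpow_natCast q (t + 1), ← zpow_add₀ hqne, ← zpow_add₀ hqne]
        congr 1
        push_cast
        linear_combination -ht
      exact alg _ _ _ _ _ _ _ _ _ _ _ _
        (ne_of_gt (qPoch_pos hq0 hq1 m)) (ne_of_gt (qPoch_pos hq0 hq1 t))
        (ne_of_gt (qPoch_pos hq0 hq1 K)) (ne_of_gt (one_sub_pow_pos hq0 hq1 m))
        (ne_of_gt (one_sub_pow_pos hq0 hq1 t)) hz2 hz3 hz4
    · by_cases h2 : 0 ≤ (m : ℤ) + B + 2
      · have hB : B = -(m : ℤ) - 2 := by omega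
        subst hB
        rw [if_neg (by rintro ⟨c1, c2⟩; push_cast at c1; omega),
            if_pos (⟨by push_cast; omega, by push_cast; omega⟩ :
              0 ≤ ((m : ℕ) : ℤ) + (-(m : ℤ) - 2 + 2)
                ∧ 0 ≤ (L : ℤ) - 2 * ((m : ℕ) : ℤ) - (-(m : ℤ) - 2 + 2)),
            if_neg (by rintro ⟨c1, c2⟩; push_cast at c1; omega),
            if_pos (⟨by push_cast; omega, by push_cast; omega⟩ :
              0 ≤ ((m : ℕ) : ℤ) + (-(m : ℤ) - 2 + 2)
                ∧ 0 ≤ (L : ℤ) - 2 * ((m : ℕ) : ℤ) - (-(m : ℤ) - 2 + 2))]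
        refine alg2 _ _ _ _ _ _ ?_
        rw [← zpow_add₀ hqne, ← zpow_add₀ hqne]
        congr 1
        ring
      · rw [if_neg (by rintro ⟨c1, c2⟩; push_cast at c1; omega),
            if_neg (by rintro ⟨c1, c2⟩; push_cast at c1; omega),
            if_neg (by rintro ⟨c1, c2⟩; push_cast at c1; omega),
            if_neg (by rintro ⟨c1, c2⟩; push_cast at c1; omega)]
        simp
  · rw [if_neg (by rintro ⟨c1, c2⟩; push_cast at c2; omega),
        if_neg (by rintro ⟨c1, c2⟩; push_cast at c2; omega),
        if_neg (by rintro ⟨c1, c2⟩; push_cast at c2; omega),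
        if_neg (by rintro ⟨c1, c2⟩; push_cast at c2; omega)]
    simp

lemma qTri_key (hq0 : 0 < q) (hq1 : q < 1) (L : ℕ) (B : ℤ) :
    qTri q 1 L B - q ^ B * qTri q 1 L (B + 2)
      = qTri q 0 L B - q ^ (2 * B + 2) * qTri q 0 L (B + 2) := by
  rw [qTri_eq_sum 1 L B (N := L + 1 + 1) (by omega),
      qTri_eq_sum 1 L (B + 2) (N := L + 1) le_rfl,
      qTri_eq_sum 0 L B (N := L + 1 + 1) (by omega),
      qTri_eq_sum 0 L (B + 2) (N := L + 1) le_rfl,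
      Finset.sum_range_succ' (fun j => triTerm q 1 L B j) (L + 1),
      Finset.sum_range_succ' (fun j => triTerm q 0 L B j) (L + 1),
      Finset.mul_sum, Finset.mul_sum]
  have h00 : triTerm q 1 L B 0 = triTerm q 0 L B 0 := by
    rw [triTerm, triTerm]
    split_ifs with h
    · norm_num
    · rfl
  have hsum : ∑ j ∈ Finset.range (L + 1),
        (triTerm q 1 L B (j + 1) - q ^ B * triTerm q 1 L (B + 2) j)
      = ∑ j ∈ Finset.range (L + 1),
        (triTerm q 0 L B (j + 1) - q ^ (2 * B + 2) * triTerm q 0 L (B + 2) j) :=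
    Finset.sum_congr rfl fun j _ => key_term hq0 hq1 L B j
  rw [Finset.sum_sub_distrib, Finset.sum_sub_distrib] at hsum
  linarith [hsum, h00]

/-! ### Pieces for the main assembly -/

def bF (p a j : ℤ) : ℤ := 2 * p * j + a + p - 1

def eF (p a j : ℤ) : ℤ := p * (p + 1) * j ^ 2 + j * ((p + 1) * a + p * (p - 1)) + a * p - (p - 1)

def tO (q : ℝ) (p a : ℤ) (L : ℕ) (j : ℤ) : ℝ :=
  q ^ (eF p a j + bF p a j) * qTri q 1 L (bF p a j + 2)

def tT (q : ℝ) (p a : ℤ) (L : ℕ) (j : ℤ) : ℝ :=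
  q ^ (eF p a j) * qTri q 1 L (bF p a j)

def sO (q : ℝ) (p a : ℤ) (L : ℕ) (j : ℤ) : ℝ :=
  q ^ (eF p a j + (2 * bF p a j + 2)) * qTri q 0 L (bF p a j + 2)

def sT (q : ℝ) (p a : ℤ) (L : ℕ) (j : ℤ) : ℝ :=
  q ^ (eF p a j) * qTri q 0 L (bF p a j)

def bS (q : ℝ) (p a : ℤ) (L : ℕ) (j : ℤ) : ℝ :=
  q ^ (p * (p + 1) * j ^ 2 + j * ((p + 1) * (p - a) - p * 2)) * qTri q 0 L (2 * p * j + (p - a) - 1)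
    - q ^ ((p * j + (p - a)) * ((p + 1) * j + 2)) * qTri q 0 L (2 * p * j + (p - a) + 1)

def negSub : ℤ ≃ ℤ where
  toFun j := -j - 1
  invFun j := -j - 1
  left_inv j := by ring
  right_inv j := by ring

end BtReflAux

open BtReflAux in
/-- Reflection property: for integers `p ≥ 4`, `1 ≤ a ≤ p-1`, every `L ≥ 0` and
`0 < q < 1`: `B̃^p_{a,p-1}(L,p+1) = q^{a-p+1} B^p_{p-a,1}(L,2)`. -/
theorem Btpoly_reflection (p a : ℤ) (hp : 4 ≤ p) (ha1 : 1 ≤ a) (ha2 : a ≤ p - 1)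
    (L : ℕ) (q : ℝ) (hq0 : 0 < q) (hq1 : q < 1) :
    Btpoly q p a (p - 1) (p + 1) L = q ^ (a - p + 1) * Bpoly q p (p - a) 1 2 L := by
  have hqne : q ≠ 0 := ne_of_gt hq0
  -- support bound
  set S : Finset ℤ := Finset.Icc (-(L : ℤ) - 2) ((L : ℤ) + 2) with hS
  have hbound : ∀ (n c : ℤ), -(2 * p) ≤ c → c ≤ 2 * p → ∀ j ∉ S,
      qTri q n L (2 * p * j + c) = 0 := by
    intro n c hc1 hc2 j hj
    rw [hS, Finset.mem_Icc] at hj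
    refine qTri_zero ?_
    rw [abs_le]
    rintro ⟨g1, g2⟩
    refine hj ⟨?_, ?_⟩
    · by_contra hcon
      push_neg at hcon
      have h2 : 2 * p * j ≤ 2 * p * (-(L : ℤ) - 3) :=
        mul_le_mul_of_nonneg_left (by omega) (by omega)
      nlinarith [g1, hc2, h2, mul_nonneg (show (0 : ℤ) ≤ p from by omega)
        (show (0 : ℤ) ≤ (L : ℤ) from Int.natCast_nonneg L)]
    · by_contra hcon
      push_neg at hcon
      have h2 : 2 * p * ((L : ℤ) + 3) ≤ 2 * p * j :=
        mul_le_mul_of_nonneg_left (by omega) (by omega)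
      nlinarith [g2, hc1, h2, mul_nonneg (show (0 : ℤ) ≤ p from by omega)
        (show (0 : ℤ) ≤ (L : ℤ) from Int.natCast_nonneg L)]
  -- summability
  have hsum_tO : Summable (tO q p a L) := by
    refine summable_of_ne_finset_zero (s := S) fun j hj => ?_
    rw [tO, show bF p a j + 2 = 2 * p * j + (a + p + 1) from by rw [bF]; ring,
        hbound 1 (a + p + 1) (by omega) (by omega) j hj, mul_zero]
  have hsum_tT : Summable (tT q p a L) := by
    refine summable_of_ne_finset_zero (s := S) fun j hj => ?_
    rw [tT, show bF p a j = 2 * p * j + (a + p - 1) from by rw [bF]; ring,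
        hbound 1 (a + p - 1) (by omega) (by omega) j hj, mul_zero]
  have hsum_tO' : Summable (fun j => tO q p a L (j - 1)) := by
    refine summable_of_ne_finset_zero (s := S) fun j hj => ?_
    rw [tO, show bF p a (j - 1) + 2 = 2 * p * j + (a - p + 1) from by rw [bF]; ring,
        hbound 1 (a - p + 1) (by omega) (by omega) j hj, mul_zero]
  -- pointwise identities
  have hfj : ∀ j : ℤ,
      q ^ (p * (p + 1) * j ^ 2 + j * ((p + 1) * a - p * (p + 1)))
          * qTri q 1 L (2 * p * j + a - (p - 1))
        - q ^ (p * (p + 1) * j ^ 2 + j * ((p + 1) * a + p * ((p + 1) - 2))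
            + a * ((p + 1) - 1) - (p - 1)) * qTri q 1 L (2 * p * j + a + (p - 1))
      = tO q p a L (j - 1) - tT q p a L j := by
    intro j
    rw [tO, tT,
      show 2 * p * j + a - (p - 1) = bF p a (j - 1) + 2 from by rw [bF]; ring,
      show p * (p + 1) * j ^ 2 + j * ((p + 1) * a - p * (p + 1))
          = eF p a (j - 1) + bF p a (j - 1) from by rw [eF, bF]; ring,
      show 2 * p * j + a + (p - 1) = bF p a j from by rw [bF]; ring,
      show p * (p + 1) * j ^ 2 + j * ((p + 1) * a + p * ((p + 1) - 2))
            + a * ((p + 1) - 1) - (p - 1) = eF p a j from by rw [eF]; ring]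
  have hkey : ∀ j : ℤ, tO q p a L j - tT q p a L j = sO q p a L j - sT q p a L j := by
    intro j
    have h := qTri_key hq0 hq1 L (bF p a j)
    rw [tO, tT, sO, sT, zpow_add₀ hqne (eF p a j) (bF p a j),
        zpow_add₀ hqne (eF p a j) (2 * bF p a j + 2)]
    linear_combination (-(q ^ (eF p a j))) * h
  have hgj : ∀ j : ℤ, sO q p a L j - sT q p a L j = q ^ (a - p + 1) * bS q p a L (-j - 1) := by
    intro j
    rw [bS, mul_sub, ← mul_assoc, ← mul_assoc, ← zpow_add₀ hqne, ← zpow_add₀ hqne,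
        show 2 * p * (-j - 1) + (p - a) - 1 = -(bF p a j + 2) from by rw [bF]; ring,
        show 2 * p * (-j - 1) + (p - a) + 1 = -(bF p a j) from by rw [bF]; ring,
        qTri_even, qTri_even,
        show a - p + 1 + (p * (p + 1) * (-j - 1) ^ 2 + (-j - 1) * ((p + 1) * (p - a) - p * 2))
            = eF p a j + (2 * bF p a j + 2) from by rw [eF, bF]; ring,
        show a - p + 1 + (p * (-j - 1) + (p - a)) * ((p + 1) * (-j - 1) + 2)
            = eF p a j from by rw [eF]; ring,
        sO, sT]
  -- assembly
  calc Btpoly q p a (p - 1) (p + 1) L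
      = ∑' j : ℤ, (tO q p a L (j - 1) - tT q p a L j) := by
        rw [Btpoly]; exact tsum_congr hfj
    _ = (∑' j : ℤ, tO q p a L (j - 1)) - ∑' j : ℤ, tT q p a L j := Summable.tsum_sub hsum_tO' hsum_tT
    _ = (∑' j : ℤ, tO q p a L j) - ∑' j : ℤ, tT q p a L j := by
        congr 1
        have h := (Equiv.subRight (1 : ℤ)).tsum_eq (tO q p a L)
        simp only [Equiv.subRight_apply] at h
        exact h
    _ = ∑' j : ℤ, (tO q p a L j - tT q p a L j) := (Summable.tsum_sub hsum_tO hsum_tT).symm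
    _ = ∑' j : ℤ, (sO q p a L j - sT q p a L j) := tsum_congr hkey
    _ = ∑' j : ℤ, q ^ (a - p + 1) * bS q p a L (-j - 1) := tsum_congr hgj
    _ = ∑' j : ℤ, q ^ (a - p + 1) * bS q p a L j := by
        have h := negSub.tsum_eq (fun i => q ^ (a - p + 1) * bS q p a L i)
        simp only [negSub, Equiv.coe_fn_mk] at h
        exact h
    _ = q ^ (a - p + 1) * ∑' j : ℤ, bS q p a L j := tsum_mul_left
    _ = q ^ (a - p + 1) * Bpoly q p (p - a) 1 2 L := by
        rw [Bpoly]
        congr 1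
end
end
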